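/- arXiv:math/0102183 — 3 statements merged into one kernel-verified Lean document; each statement's English description precedes it below -/
import Mathlib

section
/- If two u-Hopf circles have distinct Hopf projections, they are disjoint: for unit imaginary u and unit quaternions p, q with Π_u(p) ≠ Π_u(q), the circles t ↦ p(cos t + u sin t) and t ↦ q(cos t + u sin t) have no common point. -/
/-- If two `u`-Hopf circles have distinct Hopf projections, they are disjoint:
for unit imaginary `u` and unit quaternions `p`, `q` with `Π_u(p) ≠ Π_u(q)`,
the circles `t ↦ p(cos t + u sin t)` and `t ↦ q(cos t + u sin t)` have no common point. -/
theorem hopf_circles_disjoint (u p q : Quaternion ℝ)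
    (hu_im : u.re = 0) (hu : ‖u‖ = 1) (hp : ‖p‖ = 1) (hq : ‖q‖ = 1)
    (hne : p * u * star p ≠ q * u * star q) :
    ∀ s t : ℝ,
      p * ((Real.cos s : Quaternion ℝ) + Real.sin s • u) ≠
      q * ((Real.cos t : Quaternion ℝ) + Real.sin t • u) := by
  intro s t h
  apply hne
  have hnu : Quaternion.normSq u = 1 := by
    rw [Quaternion.normSq_eq_norm_mul_self, hu]; ring
  have key : ∀ r : ℝ,
      ((Real.cos r : Quaternion ℝ) + Real.sin r • u) * u *
        star ((Real.cos r : Quaternion ℝ) + Real.sin r • u) = u := by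
    intro r
    set z : Quaternion ℝ := (Real.cos r : Quaternion ℝ) + Real.sin r • u with hz
    have hcomm : z * u = u * z := by
      rw [hz, add_mul, mul_add, smul_mul_assoc, mul_smul_comm]
      rw [Quaternion.coe_mul_eq_smul, ← Quaternion.coe_mul_eq_smul,
        Quaternion.coe_commutes]
    have hzz : z * star z = 1 := by
      rw [Quaternion.self_mul_star]
      have hns : Quaternion.normSq z = 1 := by
        simp only [Quaternion.normSq_def'] at hnu ⊢
        simp only [hz, Quaternion.re_add, Quaternion.imI_add, Quaternion.imJ_add,
          Quaternion.imK_add, Quaternion.re_coe, Quaternion.imI_coe,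
          Quaternion.imJ_coe, Quaternion.imK_coe, Quaternion.re_smul,
          Quaternion.imI_smul, Quaternion.imJ_smul, Quaternion.imK_smul,
          smul_eq_mul, hu_im]
        nlinarith [Real.sin_sq_add_cos_sq r]
      rw [hns, Quaternion.coe_one]
    rw [hcomm, mul_assoc, hzz, mul_one]
  calc p * u * star p
      = p * (((Real.cos s : Quaternion ℝ) + Real.sin s • u) * u *
          star ((Real.cos s : Quaternion ℝ) + Real.sin s • u)) * star p := by rw [key]
    _ = (p * ((Real.cos s : Quaternion ℝ) + Real.sin s • u)) * u *
          star (p * ((Real.cos s : Quaternion ℝ) + Real.sin s • u)) := by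
        simp [star_mul, mul_assoc]
    _ = (q * ((Real.cos t : Quaternion ℝ) + Real.sin t • u)) * u *
          star (q * ((Real.cos t : Quaternion ℝ) + Real.sin t • u)) := by rw [h]
    _ = q * (((Real.cos t : Quaternion ℝ) + Real.sin t • u) * u *
          star ((Real.cos t : Quaternion ℝ) + Real.sin t • u)) * star q := by
        simp [star_mul, mul_assoc]
    _ = q * u * star q := by rw [key]
end

section
/- Three numbers n₁, n₂, n₃ ∈ (0, π] are the pairwise spherical distances of some triple of distinct points on the unit two-sphere if and only if they satisfy n₁ ≤ n₂ + n₃, n₂ ≤ n₃ + n₁, n₃ ≤ n₁ + n₂, and n₁ + n₂ + n₃ ≤ 2π. -/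
open scoped RealInnerProductSpace
open Real

open Real in
private lemma arccos_antitone : Antitone Real.arccos := fun x y h => by
  simp only [Real.arccos]
  linarith [Real.monotone_arcsin h]

private lemma key_inner {E : Type*} [NormedAddCommGroup E] [InnerProductSpace ℝ E]
    (x y z : E) (hx : ‖x‖ = 1) (hy : ‖y‖ = 1) (hz : ‖z‖ = 1) :
    ⟪x, y⟫ * ⟪y, z⟫ - √(1 - ⟪x, y⟫ ^ 2) * √(1 - ⟪y, z⟫ ^ 2) ≤ ⟪x, z⟫ := by
  set u := x - ⟪x, y⟫ • y with hu
  set v := z - ⟪y, z⟫ • y with hv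
  have hyy : ⟪y, y⟫ = 1 := by rw [real_inner_self_eq_norm_sq, hy]; norm_num
  have hxx : ⟪x, x⟫ = 1 := by rw [real_inner_self_eq_norm_sq, hx]; norm_num
  have hzz : ⟪z, z⟫ = 1 := by rw [real_inner_self_eq_norm_sq, hz]; norm_num
  have huv : ⟪u, v⟫ = ⟪x, z⟫ - ⟪x, y⟫ * ⟪y, z⟫ := by
    simp only [hu, hv, inner_sub_left, inner_sub_right, real_inner_smul_left,
      real_inner_smul_right, hyy]
    ring
  have hnu : ‖u‖ = √(1 - ⟪x, y⟫ ^ 2) := by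
    have : ‖u‖ ^ 2 = 1 - ⟪x, y⟫ ^ 2 := by
      rw [← real_inner_self_eq_norm_sq]
      simp only [hu, inner_sub_left, inner_sub_right, real_inner_smul_left,
        real_inner_smul_right, hyy, hxx]
      linear_combination ⟪x, y⟫ * real_inner_comm y x
    rw [← this, Real.sqrt_sq (norm_nonneg u)]
  have hnv : ‖v‖ = √(1 - ⟪y, z⟫ ^ 2) := by
    have : ‖v‖ ^ 2 = 1 - ⟪y, z⟫ ^ 2 := by
      rw [← real_inner_self_eq_norm_sq]
      simp only [hv, inner_sub_left, inner_sub_right, real_inner_smul_left,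
        real_inner_smul_right, hyy, hzz]
      linear_combination ⟪y, z⟫ * real_inner_comm z y
    rw [← this, Real.sqrt_sq (norm_nonneg v)]
  have := abs_real_inner_le_norm u v
  rw [hnu, hnv, abs_le] at this
  linarith [this.1, huv]

private lemma angle_tri {E : Type*} [NormedAddCommGroup E] [InnerProductSpace ℝ E]
    (x y z : E) (hx : ‖x‖ = 1) (hy : ‖y‖ = 1) (hz : ‖z‖ = 1) :
    Real.arccos ⟪x, z⟫ ≤ Real.arccos ⟪x, y⟫ + Real.arccos ⟪y, z⟫ := by
  have hab : |⟪x, y⟫| ≤ 1 := by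
    have := abs_real_inner_le_norm x y; rwa [hx, hy, mul_one] at this
  have hbc : |⟪y, z⟫| ≤ 1 := by
    have := abs_real_inner_le_norm y z; rwa [hy, hz, mul_one] at this
  rw [abs_le] at hab hbc
  rcases le_or_gt Real.pi (Real.arccos ⟪x, y⟫ + Real.arccos ⟪y, z⟫) with h | h
  · exact (Real.arccos_le_pi _).trans h
  · have hcos : Real.cos (Real.arccos ⟪x, y⟫ + Real.arccos ⟪y, z⟫) ≤ ⟪x, z⟫ := by
      rw [Real.cos_add, Real.cos_arccos hab.1 hab.2, Real.cos_arccos hbc.1 hbc.2,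
        Real.sin_arccos, Real.sin_arccos]
      exact key_inner x y z hx hy hz
    calc Real.arccos ⟪x, z⟫ ≤ Real.arccos (Real.cos (Real.arccos ⟪x, y⟫ + Real.arccos ⟪y, z⟫)) :=
          arccos_antitone hcos
      _ = _ := Real.arccos_cos
          (by have := Real.arccos_nonneg ⟪x, y⟫; have := Real.arccos_nonneg ⟪y, z⟫; linarith) h.le

private lemma ne_of_inner_eq_cos {E : Type*} [NormedAddCommGroup E] [InnerProductSpace ℝ E]
    {p q : E} (hp : ‖p‖ = 1) {t : ℝ} (ht : 0 < t) (ht' : t ≤ π)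
    (h : ⟪p, q⟫ = Real.cos t) : p ≠ q := by
  rintro rfl
  rw [real_inner_self_eq_norm_sq, hp, one_pow] at h
  have h0 : Real.arccos (Real.cos t) = Real.arccos 1 := by rw [← h]
  rw [Real.arccos_cos ht.le ht', Real.arccos_one] at h0
  linarith

/-- Three numbers `n₁, n₂, n₃ ∈ (0, π]` are the pairwise spherical distances of some triple
of distinct points on the unit two-sphere if and only if they satisfy the spherical triangle
inequalities `n₁ ≤ n₂ + n₃`, `n₂ ≤ n₃ + n₁`, `n₃ ≤ n₁ + n₂`, and `n₁ + n₂ + n₃ ≤ 2π`. -/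
theorem spherical_triangle_inequalities (n₁ n₂ n₃ : ℝ)
    (h₁ : n₁ ∈ Set.Ioc 0 Real.pi) (h₂ : n₂ ∈ Set.Ioc 0 Real.pi)
    (h₃ : n₃ ∈ Set.Ioc 0 Real.pi) :
    (∃ p₁ p₂ p₃ : EuclideanSpace ℝ (Fin 3),
      ‖p₁‖ = 1 ∧ ‖p₂‖ = 1 ∧ ‖p₃‖ = 1 ∧
      p₁ ≠ p₂ ∧ p₂ ≠ p₃ ∧ p₃ ≠ p₁ ∧
      Real.arccos ⟪p₂, p₃⟫ = n₁ ∧ Real.arccos ⟪p₃, p₁⟫ = n₂ ∧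
      Real.arccos ⟪p₁, p₂⟫ = n₃) ↔
    (n₁ ≤ n₂ + n₃ ∧ n₂ ≤ n₃ + n₁ ∧ n₃ ≤ n₁ + n₂ ∧ n₁ + n₂ + n₃ ≤ 2 * Real.pi) := by
  obtain ⟨h₁0, h₁π⟩ := h₁
  obtain ⟨h₂0, h₂π⟩ := h₂
  obtain ⟨h₃0, h₃π⟩ := h₃
  constructor
  · rintro ⟨p₁, p₂, p₃, u₁, u₂, u₃, -, -, -, e₁, e₂, e₃⟩
    have c21 : Real.arccos ⟪p₂, p₁⟫ = n₃ := by rw [real_inner_comm]; exact e₃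
    have c13 : Real.arccos ⟪p₁, p₃⟫ = n₂ := by rw [real_inner_comm]; exact e₂
    have c32 : Real.arccos ⟪p₃, p₂⟫ = n₁ := by rw [real_inner_comm]; exact e₁
    have t1 := angle_tri p₂ p₁ p₃ u₂ u₁ u₃
    have t2 := angle_tri p₃ p₂ p₁ u₃ u₂ u₁
    have t3 := angle_tri p₁ p₃ p₂ u₁ u₃ u₂
    have t4 := angle_tri p₂ (-p₁) p₃ u₂ (by rw [norm_neg]; exact u₁) u₃
    rw [inner_neg_right, inner_neg_left, Real.arccos_neg, Real.arccos_neg] at t4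
    rw [e₁, c21, c13] at t1
    rw [e₂, c32, c21] at t2
    rw [e₃, c13, c32] at t3
    rw [e₁, c21, c13] at t4
    exact ⟨by linarith, by linarith, by linarith, by linarith⟩
  · rintro ⟨ha, hb, hc, hd⟩
    -- key cosine bounds
    have hs₂ : 0 ≤ Real.sin n₂ := Real.sin_nonneg_of_nonneg_of_le_pi h₂0.le h₂π
    have hs₃ : 0 ≤ Real.sin n₃ := Real.sin_nonneg_of_nonneg_of_le_pi h₃0.le h₃π
    have hub : Real.cos n₁ ≤ Real.cos n₂ * Real.cos n₃ + Real.sin n₂ * Real.sin n₃ := by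
      rcases le_total n₃ n₂ with h | h
      · have := Real.cos_le_cos_of_nonneg_of_le_pi (by linarith : (0:ℝ) ≤ n₂ - n₃) h₁π
          (by linarith : n₂ - n₃ ≤ n₁)
        rwa [Real.cos_sub] at this
      · have := Real.cos_le_cos_of_nonneg_of_le_pi (by linarith : (0:ℝ) ≤ n₃ - n₂) h₁π
          (by linarith : n₃ - n₂ ≤ n₁)
        rw [Real.cos_sub] at this
        linarith
    have hlb : Real.cos n₂ * Real.cos n₃ - Real.sin n₂ * Real.sin n₃ ≤ Real.cos n₁ := by
      rcases le_or_gt (n₂ + n₃) π with h | h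
      · have := Real.cos_le_cos_of_nonneg_of_le_pi h₁0.le h (ha)
        rwa [Real.cos_add] at this
      · have h2 : Real.cos (n₂ + n₃) = Real.cos (2 * π - (n₂ + n₃)) := by
          rw [Real.cos_sub, Real.cos_two_pi, Real.sin_two_pi]
          ring
        have := Real.cos_le_cos_of_nonneg_of_le_pi h₁0.le
          (by linarith : 2 * π - (n₂ + n₃) ≤ π) (by linarith : n₁ ≤ 2 * π - (n₂ + n₃))
        rw [← h2, Real.cos_add] at this
        linarith
    set c : ℝ := (Real.cos n₁ - Real.cos n₂ * Real.cos n₃) / (Real.sin n₂ * Real.sin n₃)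
      with hcdef
    have hc1 : -1 ≤ c ∧ c ≤ 1 := by
      rcases eq_or_lt_of_le (mul_nonneg hs₂ hs₃) with h0 | h0
      · rw [hcdef, ← h0, div_zero]; norm_num
      · constructor
        · rw [hcdef, le_div_iff₀ h0]; linarith
        · rw [hcdef, div_le_one h0]; linarith
    set q : ℝ := √(1 - c ^ 2) with hqdef
    have hq2 : q ^ 2 = 1 - c ^ 2 := Real.sq_sqrt (by nlinarith [hc1.1, hc1.2])
    -- the key inner product identity
    have heq : Real.sin n₃ * (Real.sin n₂ * c) + Real.cos n₃ * Real.cos n₂ = Real.cos n₁ := by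
      rcases eq_or_lt_of_le (mul_nonneg hs₂ hs₃) with h0 | h0
      · have hz : Real.sin n₃ * (Real.sin n₂ * c) = 0 := by
          rcases mul_eq_zero.1 h0.symm with h | h <;> rw [h] <;> ring
        have : Real.cos n₁ = Real.cos n₂ * Real.cos n₃ := by nlinarith
        rw [hz, this]; ring
      · rw [hcdef]
        have := left_ne_zero_of_mul h0.ne'
        have := right_ne_zero_of_mul h0.ne'
        field_simp
        ring
    set P₁ : EuclideanSpace ℝ (Fin 3) := (WithLp.equiv 2 (Fin 3 → ℝ)).symm ![0, 0, 1]
      with hP₁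
    set P₂ : EuclideanSpace ℝ (Fin 3) :=
      (WithLp.equiv 2 (Fin 3 → ℝ)).symm ![Real.sin n₃, 0, Real.cos n₃] with hP₂
    set P₃ : EuclideanSpace ℝ (Fin 3) :=
      (WithLp.equiv 2 (Fin 3 → ℝ)).symm ![Real.sin n₂ * c, Real.sin n₂ * q, Real.cos n₂]
      with hP₃
    have hn1 : ‖P₁‖ = 1 := by
      simp [hP₁, EuclideanSpace.norm_eq, Fin.sum_univ_three, WithLp.equiv_symm_apply, PiLp.toLp_apply]
    have hn2 : ‖P₂‖ = 1 := by
      rw [hP₂, EuclideanSpace.norm_eq]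
      simp only [WithLp.equiv_symm_apply, PiLp.toLp_apply, Fin.sum_univ_three, Matrix.cons_val_zero,
        Matrix.cons_val_one, Matrix.head_cons, Matrix.cons_val_two, Matrix.tail_cons]
      rw [show ‖Real.sin n₃‖ ^ 2 + ‖(0:ℝ)‖ ^ 2 + ‖Real.cos n₃‖ ^ 2 = 1 by
        simp only [Real.norm_eq_abs, sq_abs, norm_zero]
        linear_combination Real.sin_sq_add_cos_sq n₃]
      exact Real.sqrt_one
    have hn3 : ‖P₃‖ = 1 := by
      rw [hP₃, EuclideanSpace.norm_eq]
      simp only [WithLp.equiv_symm_apply, PiLp.toLp_apply, Fin.sum_univ_three, Matrix.cons_val_zero,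
        Matrix.cons_val_one, Matrix.head_cons, Matrix.cons_val_two, Matrix.tail_cons]
      rw [show ‖Real.sin n₂ * c‖ ^ 2 + ‖Real.sin n₂ * q‖ ^ 2 + ‖Real.cos n₂‖ ^ 2 = 1 by
        simp only [Real.norm_eq_abs, sq_abs]
        linear_combination (Real.sin n₂) ^ 2 * hq2 + Real.sin_sq_add_cos_sq n₂]
      exact Real.sqrt_one
    have hi23 : ⟪P₂, P₃⟫ = Real.cos n₁ := by
      rw [hP₂, hP₃]
      simp only [PiLp.inner_apply, Fin.sum_univ_three, WithLp.equiv_symm_apply, PiLp.toLp_apply,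
        Matrix.cons_val_zero, Matrix.cons_val_one, Matrix.head_cons, Matrix.cons_val_two,
        Matrix.tail_cons, RCLike.inner_apply, conj_trivial]
      rw [← heq]; ring
    have hi31 : ⟪P₃, P₁⟫ = Real.cos n₂ := by
      rw [hP₃, hP₁]
      simp only [PiLp.inner_apply, Fin.sum_univ_three, WithLp.equiv_symm_apply, PiLp.toLp_apply,
        Matrix.cons_val_zero, Matrix.cons_val_one, Matrix.head_cons, Matrix.cons_val_two,
        Matrix.tail_cons, RCLike.inner_apply, conj_trivial]
      ring
    have hi12 : ⟪P₁, P₂⟫ = Real.cos n₃ := by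
      rw [hP₁, hP₂]
      simp only [PiLp.inner_apply, Fin.sum_univ_three, WithLp.equiv_symm_apply, PiLp.toLp_apply,
        Matrix.cons_val_zero, Matrix.cons_val_one, Matrix.head_cons, Matrix.cons_val_two,
        Matrix.tail_cons, RCLike.inner_apply, conj_trivial]
      ring
    exact ⟨P₁, P₂, P₃, hn1, hn2, hn3,
      ne_of_inner_eq_cos hn1 h₃0 h₃π hi12,
      ne_of_inner_eq_cos hn2 h₁0 h₁π hi23,
      ne_of_inner_eq_cos hn3 h₂0 h₂π hi31,
      by rw [hi23]; exact Real.arccos_cos h₁0.le h₁π,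
      by rw [hi31]; exact Real.arccos_cos h₂0.le h₂π,
      by rw [hi12]; exact Real.arccos_cos h₃0.le h₃π⟩
end

section
/- The space T of ordered triples of pairwise-consecutively-distinct points on S² modulo the rotation group SO(3), i.e. {(p₁,p₂,p₃) ∈ S²×S²×S² : p₁ ≠ p₂, p₂ ≠ p₃, p₃ ≠ p₁}/SO(3) with SO(3) acting diagonally, is homeomorphic to an open three-ball, i.e. to R³. -/
/-- The unit two-sphere in `ℝ³`. -/
def unitSphere3 : Set (EuclideanSpace ℝ (Fin 3)) := {p | ‖p‖ = 1}

/-- Triples of pairwise-consecutively-distinct points of `S²`. -/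
def DistinctTriples : Type :=
  {t : unitSphere3 × unitSphere3 × unitSphere3 //
    t.1 ≠ t.2.1 ∧ t.2.1 ≠ t.2.2 ∧ t.2.2 ≠ t.1}

noncomputable instance : TopologicalSpace DistinctTriples :=
  inferInstanceAs (TopologicalSpace
    {t : unitSphere3 × unitSphere3 × unitSphere3 //
      t.1 ≠ t.2.1 ∧ t.2.1 ≠ t.2.2 ∧ t.2.2 ≠ t.1})

/-- Two triples are related iff some rotation `A ∈ SO(3)` carries one to the other,
acting diagonally. -/
def rotRel (t s : DistinctTriples) : Prop :=
  ∃ A : Matrix.specialOrthogonalGroup (Fin 3) ℝ,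
    (s.1.1.1 : EuclideanSpace ℝ (Fin 3)) = (A : Matrix (Fin 3) (Fin 3) ℝ).mulVec t.1.1.1 ∧
    (s.1.2.1.1 : EuclideanSpace ℝ (Fin 3)) = (A : Matrix (Fin 3) (Fin 3) ℝ).mulVec t.1.2.1.1 ∧
    (s.1.2.2.1 : EuclideanSpace ℝ (Fin 3)) = (A : Matrix (Fin 3) (Fin 3) ℝ).mulVec t.1.2.2.1


noncomputable section
namespace TB
open Real

abbrev E := EuclideanSpace ℝ (Fin 3)

def mk3 (a b c : ℝ) : E := (WithLp.equiv 2 (Fin 3 → ℝ)).symm ![a,b,c]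

@[simp] lemma mk3_0 (a b c : ℝ) : mk3 a b c 0 = a := rfl
@[simp] lemma mk3_1 (a b c : ℝ) : mk3 a b c 1 = b := rfl
@[simp] lemma mk3_2 (a b c : ℝ) : mk3 a b c 2 = c := rfl

def dot (x y : E) : ℝ := x 0 * y 0 + x 1 * y 1 + x 2 * y 2

def cross (x y : E) : E :=
  mk3 (x 1 * y 2 - x 2 * y 1) (x 2 * y 0 - x 0 * y 2) (x 0 * y 1 - x 1 * y 0)

@[simp] lemma sub_apply (x y : E) (i : Fin 3) : (x - y) i = x i - y i := rfl
@[simp] lemma smul_apply' (c : ℝ) (x : E) (i : Fin 3) : (c • x) i = c * x i := rfl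

lemma ext3 {x y : E} (h0 : x 0 = y 0) (h1 : x 1 = y 1) (h2 : x 2 = y 2) : x = y := by
  ext i; fin_cases i <;> assumption

lemma norm_eq_sqrt_dot (x : E) : ‖x‖ = Real.sqrt (dot x x) := by
  rw [EuclideanSpace.norm_eq]
  congr 1
  simp [Fin.sum_univ_three, dot, sq_abs]
  ring

lemma mem_sphere_iff (x : E) : x ∈ unitSphere3 ↔ dot x x = 1 := by
  constructor
  · intro h
    have h1 : Real.sqrt (dot x x) = 1 := by rw [← norm_eq_sqrt_dot]; exact h
    have h2 : 0 ≤ dot x x := by unfold dot; nlinarith [sq_nonneg (x 0), sq_nonneg (x 1), sq_nonneg (x 2)]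
    nlinarith [Real.sq_sqrt h2]
  · intro h
    show ‖x‖ = 1
    rw [norm_eq_sqrt_dot, h, Real.sqrt_one]

lemma dot_self_nonneg (x : E) : 0 ≤ dot x x := by
  unfold dot; nlinarith [sq_nonneg (x 0), sq_nonneg (x 1), sq_nonneg (x 2)]

lemma eq_of_dot_sub_self (x y : E) (h : dot (x - y) (x - y) = 0) : x = y := by
  have h0 : (x 0 - y 0)^2 + (x 1 - y 1)^2 + (x 2 - y 2)^2 = 0 := by
    unfold dot at h; simp only [sub_apply] at h; nlinarith [h]
  have e0 : (x 0 - y 0)^2 = 0 := by nlinarith [sq_nonneg (x 1 - y 1), sq_nonneg (x 2 - y 2)]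
  have e1 : (x 1 - y 1)^2 = 0 := by nlinarith [sq_nonneg (x 0 - y 0), sq_nonneg (x 2 - y 2)]
  have e2 : (x 2 - y 2)^2 = 0 := by nlinarith [sq_nonneg (x 0 - y 0), sq_nonneg (x 1 - y 1)]
  apply ext3 <;> nlinarith [e0, e1, e2]

lemma dot_pos_of_ne (x y : E) (h : x ≠ y) : 0 < dot (x - y) (x - y) := by
  rcases lt_or_eq_of_le (dot_self_nonneg (x - y)) with h' | h'
  · exact h'
  · exact absurd (eq_of_dot_sub_self x y h'.symm) h

section prim
variable (x y z : E) (c : ℝ)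

lemma dot_comm : dot x y = dot y x := by unfold dot; ring

lemma dot_cross_self_left : dot (cross x y) x = 0 := by unfold dot cross; simp; ring

lemma dot_cross_self_right : dot (cross x y) y = 0 := by unfold dot cross; simp; ring

lemma lagrange : dot (cross x y) (cross x y) = dot x x * dot y y - (dot x y)^2 := by
  unfold dot cross; simp; ring

lemma cross_smul_left : cross (c • x) y = c • cross x y := by
  apply ext3 <;> (unfold cross; simp) <;> ring

lemma cross_smul_right : cross x (c • y) = c • cross x y := by
  apply ext3 <;> (unfold cross; simp) <;> ring

lemma dvcnu : dot y (cross (cross x y) x) = dot x x * dot y y - (dot x y)^2 := by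
  unfold dot cross; simp; ring

lemma dot_u_cross_nu : dot x (cross (cross x y) x) = 0 := by
  unfold dot cross; simp; ring

lemma cross_cross_self : cross x (cross x y) = (dot x y) • x - (dot x x) • y := by
  apply ext3 <;> (unfold cross dot; simp) <;> ring

end prim

section frame
variable (P1 P2 P3 : E)

def uu : E := P2 - P1
def vv : E := P3 - P1
def nv : E := cross (uu P1 P2) (vv P1 P3)
def Qd : ℝ := dot (uu P1 P2) (uu P1 P2)
def Nd : ℝ := dot (nv P1 P2 P3) (nv P1 P2 P3)
def sQ : ℝ := Real.sqrt (Qd P1 P2)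
def sN : ℝ := Real.sqrt (Nd P1 P2 P3)
def eh : E := (sQ P1 P2)⁻¹ • uu P1 P2
def nh : E := (sN P1 P2 P3)⁻¹ • nv P1 P2 P3
def mh : E := cross (nh P1 P2 P3) (eh P1 P2)
def Aa : ℝ := sQ P1 P2 / 2
def Yc : ℝ := dot P1 (mh P1 P2 P3)
def Zc : ℝ := dot P1 (nh P1 P2 P3)
def Cc : ℝ := dot P3 (eh P1 P2)
def Dc : ℝ := dot P3 (mh P1 P2 P3)

structure Good : Prop where
  n1 : dot P1 P1 = 1
  n2 : dot P2 P2 = 1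
  n3 : dot P3 P3 = 1
  d12 : P1 ≠ P2
  d23 : P2 ≠ P3
  d31 : P3 ≠ P1

variable {P1 P2 P3}

lemma Good.Q_pos (g : Good P1 P2 P3) : 0 < Qd P1 P2 := by
  have := dot_pos_of_ne P2 P1 (Ne.symm g.d12)
  simpa [Qd, uu] using this

lemma Good.sQ_pos (g : Good P1 P2 P3) : 0 < sQ P1 P2 :=
  Real.sqrt_pos.2 g.Q_pos

lemma Good.sQ_sq (g : Good P1 P2 P3) : sQ P1 P2 ^ 2 = Qd P1 P2 :=
  Real.sq_sqrt g.Q_pos.le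

lemma Good.dotP1u (g : Good P1 P2 P3) : dot P1 (uu P1 P2) = -(Qd P1 P2 / 2) := by
  have a := g.n1; have b := g.n2
  unfold dot at a b ⊢
  unfold Qd uu dot
  simp only [sub_apply]
  nlinarith [a, b]

lemma Good.dotP2u (g : Good P1 P2 P3) : dot P2 (uu P1 P2) = Qd P1 P2 / 2 := by
  have a := g.n1; have b := g.n2
  unfold dot at a b ⊢
  unfold Qd uu dot
  simp only [sub_apply]
  nlinarith [a, b]

/-- `v = μ • u` is impossible. -/
lemma Good.indep (g : Good P1 P2 P3) (μ : ℝ) : vv P1 P3 ≠ μ • uu P1 P2 := by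
  intro h
  have hQ := g.Q_pos
  have h3 := g.n3
  -- P3 = P1 + μ • (P2 - P1)
  have hdot : dot P3 P3 = 1 + 2*μ*(dot P1 (uu P1 P2)) + μ^2 * Qd P1 P2 := by
    have hv : ∀ i, P3 i - P1 i = μ * (P2 i - P1 i) := by
      intro i
      have := congrArg (fun v : E => v i) h
      simpa [vv, uu] using this
    have a := g.n1
    have e0 : P3 0 = P1 0 + μ * (P2 0 - P1 0) := by linarith [hv 0]
    have e1 : P3 1 = P1 1 + μ * (P2 1 - P1 1) := by linarith [hv 1]
    have e2 : P3 2 = P1 2 + μ * (P2 2 - P1 2) := by linarith [hv 2]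
    unfold dot at a ⊢
    unfold Qd uu dot
    simp only [sub_apply]
    rw [e0, e1, e2]
    linear_combination a
  rw [g.dotP1u] at hdot
  rw [h3] at hdot
  have hμ : μ * (μ - 1) * Qd P1 P2 = 0 := by nlinarith [hdot]
  have : μ = 0 ∨ μ = 1 := by
    rcases mul_eq_zero.1 hμ with h' | h'
    · rcases mul_eq_zero.1 h' with h'' | h''
      · exact Or.inl h''
      · exact Or.inr (by linarith)
    · exact absurd h' (ne_of_gt hQ)
  rcases this with rfl | rfl
  · apply g.d31
    have : ∀ i, P3 i = P1 i := by
      intro i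
      have := congrArg (fun v : E => v i) h
      simp [vv, uu] at this
      linarith [this]
    exact ext3 (this 0) (this 1) (this 2)
  · apply g.d23
    have : ∀ i, P3 i - P1 i = P2 i - P1 i := by
      intro i
      have := congrArg (fun v : E => v i) h
      simpa [vv, uu] using this
    refine (ext3 ?_ ?_ ?_).symm <;> [have := this 0; have := this 1; have := this 2] <;> linarith

lemma dot_sub_smul (x y : E) (c : ℝ) :
    dot (y - c • x) (y - c • x) = dot y y - 2*c*(dot x y) + c^2 * dot x x := by
  unfold dot; simp only [sub_apply, smul_apply']; ring

lemma Good.N_pos (g : Good P1 P2 P3) : 0 < Nd P1 P2 P3 := by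
  have hL : Nd P1 P2 P3 = Qd P1 P2 * dot (vv P1 P3) (vv P1 P3) - (dot (uu P1 P2) (vv P1 P3))^2 := by
    unfold Nd nv Qd
    rw [lagrange]
  rcases lt_or_eq_of_le (dot_self_nonneg (nv P1 P2 P3)) with h | h
  · exact h
  -- N = 0 : derive v = μ u, contradiction
  exfalso
  set u := uu P1 P2
  set v := vv P1 P3
  have hQ := g.Q_pos
  have h0 : Qd P1 P2 * dot v v - (dot u v)^2 = 0 := by
    rw [← hL]; exact h.symm ▸ rfl
  have hw : dot (v - (dot u v / Qd P1 P2) • u) (v - (dot u v / Qd P1 P2) • u) = 0 := by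
    rw [dot_sub_smul]
    have hQ' : dot u u = Qd P1 P2 := rfl
    rw [hQ']
    have hQne : Qd P1 P2 ≠ 0 := ne_of_gt hQ
    field_simp
    nlinarith [h0]
  exact g.indep _ (eq_of_dot_sub_self v _ hw)

end frame

section prim2
variable (x y z : E) (c : ℝ)

lemma dot_smul_left : dot (c • x) y = c * dot x y := by unfold dot; simp; ring
lemma dot_smul_right : dot x (c • y) = c * dot x y := by unfold dot; simp; ring
lemma dot_sub_left : dot (x - y) z = dot x z - dot y z := by unfold dot; simp; ring
lemma dot_sub_right : dot z (x - y) = dot z x - dot z y := by unfold dot; simp; ring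

end prim2

section frame2
variable {P1 P2 P3 : E}

lemma Good.sN_pos (g : Good P1 P2 P3) : 0 < sN P1 P2 P3 := Real.sqrt_pos.2 g.N_pos
lemma Good.sN_sq (g : Good P1 P2 P3) : sN P1 P2 P3 ^ 2 = Nd P1 P2 P3 := Real.sq_sqrt g.N_pos.le

lemma Good.dot_eh_eh (g : Good P1 P2 P3) : dot (eh P1 P2) (eh P1 P2) = 1 := by
  unfold eh
  rw [dot_smul_left, dot_smul_right]
  have h : dot (uu P1 P2) (uu P1 P2) = Qd P1 P2 := rfl
  rw [h]
  have := g.sQ_sq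
  have := g.sQ_pos
  field_simp
  nlinarith [g.sQ_sq]

lemma Good.dot_nh_nh (g : Good P1 P2 P3) : dot (nh P1 P2 P3) (nh P1 P2 P3) = 1 := by
  unfold nh
  rw [dot_smul_left, dot_smul_right]
  have h : dot (nv P1 P2 P3) (nv P1 P2 P3) = Nd P1 P2 P3 := rfl
  rw [h]
  have := g.sN_pos
  field_simp
  nlinarith [g.sN_sq]

lemma Good.dot_nh_eh (g : Good P1 P2 P3) : dot (nh P1 P2 P3) (eh P1 P2) = 0 := by
  unfold nh eh
  rw [dot_smul_left, dot_smul_right]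
  have h : dot (nv P1 P2 P3) (uu P1 P2) = 0 := dot_cross_self_left _ _
  rw [h]; ring

lemma Good.dot_mh_mh (g : Good P1 P2 P3) : dot (mh P1 P2 P3) (mh P1 P2 P3) = 1 := by
  unfold mh
  rw [lagrange, g.dot_nh_nh, g.dot_eh_eh, g.dot_nh_eh]
  ring

lemma Good.dot_mh_eh (g : Good P1 P2 P3) : dot (mh P1 P2 P3) (eh P1 P2) = 0 :=
  dot_cross_self_right _ _

lemma Good.dot_mh_nh (g : Good P1 P2 P3) : dot (mh P1 P2 P3) (nh P1 P2 P3) = 0 :=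
  dot_cross_self_left _ _

lemma Good.dot_P1_eh (g : Good P1 P2 P3) : dot P1 (eh P1 P2) = -Aa P1 P2 := by
  unfold eh Aa
  rw [dot_smul_right, g.dotP1u]
  have h1 := g.sQ_pos
  have h2 := g.sQ_sq
  field_simp
  nlinarith [h2]

lemma Good.dot_P2_eh (g : Good P1 P2 P3) : dot P2 (eh P1 P2) = Aa P1 P2 := by
  unfold eh Aa
  rw [dot_smul_right, g.dotP2u]
  have h1 := g.sQ_pos
  have h2 := g.sQ_sq
  field_simp
  nlinarith [h2]

lemma Good.dot_uu_nh (g : Good P1 P2 P3) : dot (uu P1 P2) (nh P1 P2 P3) = 0 := by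
  unfold nh
  rw [dot_smul_right]
  have : dot (uu P1 P2) (nv P1 P2 P3) = 0 := by
    rw [dot_comm]; exact dot_cross_self_left _ _
  rw [this]; ring

lemma Good.dot_uu_mh (g : Good P1 P2 P3) : dot (uu P1 P2) (mh P1 P2 P3) = 0 := by
  unfold mh nh eh nv
  rw [cross_smul_left, cross_smul_right, dot_smul_right, dot_smul_right]
  rw [dot_u_cross_nu]
  ring

lemma Good.dot_vv_nh (g : Good P1 P2 P3) : dot (vv P1 P3) (nh P1 P2 P3) = 0 := by
  unfold nh
  rw [dot_smul_right]
  have : dot (vv P1 P3) (nv P1 P2 P3) = 0 := by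
    rw [dot_comm]; exact dot_cross_self_right _ _
  rw [this]; ring

lemma Good.dot_P2_mh (g : Good P1 P2 P3) : dot P2 (mh P1 P2 P3) = Yc P1 P2 P3 := by
  have h := g.dot_uu_mh
  unfold uu at h
  rw [dot_sub_left] at h
  unfold Yc
  linarith [h]

lemma Good.dot_P2_nh (g : Good P1 P2 P3) : dot P2 (nh P1 P2 P3) = Zc P1 P2 P3 := by
  have h := g.dot_uu_nh
  unfold uu at h
  rw [dot_sub_left] at h
  unfold Zc
  linarith [h]

lemma Good.dot_P3_nh (g : Good P1 P2 P3) : dot P3 (nh P1 P2 P3) = Zc P1 P2 P3 := by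
  have h := g.dot_vv_nh
  unfold vv at h
  rw [dot_sub_left] at h
  unfold Zc
  linarith [h]

lemma Good.D_sub_Y (g : Good P1 P2 P3) :
    Dc P1 P2 P3 - Yc P1 P2 P3 = sN P1 P2 P3 / sQ P1 P2 := by
  have h : dot (vv P1 P3) (mh P1 P2 P3) = Dc P1 P2 P3 - Yc P1 P2 P3 := by
    unfold vv Dc Yc
    rw [dot_sub_left]
  rw [← h]
  unfold mh nh eh nv
  rw [cross_smul_left, cross_smul_right, dot_smul_right, dot_smul_right]
  rw [dvcnu]
  have hN : dot (uu P1 P2) (uu P1 P2) * dot (vv P1 P3) (vv P1 P3) - (dot (uu P1 P2) (vv P1 P3))^2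
      = Nd P1 P2 P3 := by
    unfold Nd nv
    rw [lagrange]
  rw [hN]
  have h1 := g.sN_pos
  have h2 := g.sN_sq
  have h3 := g.sQ_pos
  field_simp
  nlinarith [h2]

lemma Good.D_gt_Y (g : Good P1 P2 P3) : Yc P1 P2 P3 < Dc P1 P2 P3 := by
  have := g.D_sub_Y
  have h1 := g.sN_pos
  have h2 := g.sQ_pos
  have : 0 < Dc P1 P2 P3 - Yc P1 P2 P3 := by
    rw [this]; positivity
  linarith

end frame2

section matrixR
open Matrix
variable (P1 P2 P3 : E)

def Rm : Matrix (Fin 3) (Fin 3) ℝ :=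
  Matrix.of ![fun j => eh P1 P2 j, fun j => mh P1 P2 P3 j, fun j => nh P1 P2 P3 j]

variable {P1 P2 P3}

lemma Rm_apply_0 (j : Fin 3) : Rm P1 P2 P3 0 j = eh P1 P2 j := rfl
lemma Rm_apply_1 (j : Fin 3) : Rm P1 P2 P3 1 j = mh P1 P2 P3 j := rfl
lemma Rm_apply_2 (j : Fin 3) : Rm P1 P2 P3 2 j = nh P1 P2 P3 j := rfl

lemma Good.RRt (g : Good P1 P2 P3) : Rm P1 P2 P3 * (Rm P1 P2 P3)ᵀ = 1 := by
  have hee := g.dot_eh_eh; have hmm := g.dot_mh_mh; have hnn := g.dot_nh_nh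
  have hne := g.dot_nh_eh; have hme := g.dot_mh_eh; have hmn := g.dot_mh_nh
  unfold dot at hee hmm hnn hne hme hmn
  ext i j
  rw [Matrix.mul_apply]
  fin_cases i <;> fin_cases j <;>
    simp [Matrix.transpose_apply, Fin.sum_univ_three, Rm, Matrix.one_apply] <;> linarith

lemma Good.RtR (g : Good P1 P2 P3) : (Rm P1 P2 P3)ᵀ * Rm P1 P2 P3 = 1 :=
  mul_eq_one_comm.mp g.RRt

lemma Good.detR (g : Good P1 P2 P3) : (Rm P1 P2 P3).det = 1 := by
  have key : (Rm P1 P2 P3).det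
      = dot (eh P1 P2) (eh P1 P2) * dot (nh P1 P2 P3) (nh P1 P2 P3)
        - (dot (eh P1 P2) (nh P1 P2 P3))^2 := by
    rw [Matrix.det_fin_three]
    simp only [Rm_apply_0, Rm_apply_1, Rm_apply_2]
    unfold mh cross dot
    simp only [mk3_0, mk3_1, mk3_2]
    ring
  rw [key, g.dot_eh_eh, g.dot_nh_nh]
  have h := g.dot_nh_eh
  rw [dot_comm] at h
  rw [h]
  norm_num

lemma Good.col_orth (g : Good P1 P2 P3) (a b : Fin 3) :
    eh P1 P2 a * eh P1 P2 b + mh P1 P2 P3 a * mh P1 P2 P3 b + nh P1 P2 P3 a * nh P1 P2 P3 b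
      = (1 : Matrix (Fin 3) (Fin 3) ℝ) a b := by
  have h := g.RtR
  have h2 := congrFun (congrFun h a) b
  rw [← h2, Matrix.mul_apply]
  simp only [Fin.sum_univ_three, Matrix.transpose_apply, Rm_apply_0, Rm_apply_1, Rm_apply_2]
  try ring

lemma Good.parseval (g : Good P1 P2 P3) (p : E) :
    (dot p (eh P1 P2))^2 + (dot p (mh P1 P2 P3))^2 + (dot p (nh P1 P2 P3))^2 = dot p p := by
  have h00 := g.col_orth 0 0
  have h11 := g.col_orth 1 1
  have h22 := g.col_orth 2 2
  have h01 := g.col_orth 0 1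
  have h02 := g.col_orth 0 2
  have h12 := g.col_orth 1 2
  simp [Matrix.one_apply] at h00 h11 h22 h01 h02 h12
  unfold dot
  linear_combination (p 0)^2 * h00 + (p 1)^2 * h11 + (p 2)^2 * h22
    + (2 * p 0 * p 1) * h01 + (2 * p 0 * p 2) * h02 + (2 * p 1 * p 2) * h12

end matrixR

section trig
open Real

lemma mem_of_sin_gt {S θ : ℝ} (hS1 : -1 < S) (hS2 : S < 1)
    (h1 : -(π/2) ≤ θ) (h2 : θ < 3*(π/2)) (h : S < Real.sin θ) :
    Real.arcsin S < θ ∧ θ < π - Real.arcsin S := by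
  have hmono := Real.strictMonoOn_sin.monotoneOn
  constructor
  · by_contra hc
    push_neg at hc
    have hθmem : θ ∈ Set.Icc (-(π/2)) (π/2) :=
      ⟨h1, le_trans hc (Real.arcsin_le_pi_div_two S)⟩
    have hamem : Real.arcsin S ∈ Set.Icc (-(π/2)) (π/2) :=
      ⟨Real.neg_pi_div_two_le_arcsin S, Real.arcsin_le_pi_div_two S⟩
    have := hmono hθmem hamem hc
    rw [Real.sin_arcsin hS1.le hS2.le] at this
    linarith
  · by_contra hc
    push_neg at hc
    have hsin : Real.sin (π - θ) = Real.sin θ := Real.sin_pi_sub θ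
    have hφmem : π - θ ∈ Set.Icc (-(π/2)) (π/2) := by
      constructor <;> [linarith; linarith [Real.arcsin_le_pi_div_two S,
        Real.neg_pi_div_two_le_arcsin S]]
    have hamem : Real.arcsin S ∈ Set.Icc (-(π/2)) (π/2) :=
      ⟨Real.neg_pi_div_two_le_arcsin S, Real.arcsin_le_pi_div_two S⟩
    have hle : π - θ ≤ Real.arcsin S := by linarith
    have := hmono hφmem hamem hle
    rw [Real.sin_arcsin hS1.le hS2.le, hsin] at this
    linarith

lemma sin_gt_of_mem {S θ : ℝ} (hS1 : -1 < S) (hS2 : S < 1)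
    (h1 : Real.arcsin S < θ) (h2 : θ < π - Real.arcsin S) : S < Real.sin θ := by
  have hamem : Real.arcsin S ∈ Set.Icc (-(π/2)) (π/2) :=
    ⟨Real.neg_pi_div_two_le_arcsin S, Real.arcsin_le_pi_div_two S⟩
  rcases le_or_gt θ (π/2) with hθ | hθ
  · have hθmem : θ ∈ Set.Icc (-(π/2)) (π/2) :=
      ⟨le_trans (Real.neg_pi_div_two_le_arcsin S) h1.le, hθ⟩
    have := Real.strictMonoOn_sin hamem hθmem h1
    rwa [Real.sin_arcsin hS1.le hS2.le] at this
  · have hφmem : π - θ ∈ Set.Icc (-(π/2)) (π/2) := by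
      refine ⟨by linarith [Real.neg_pi_div_two_le_arcsin S], by linarith [Real.arcsin_le_pi_div_two S]⟩
    have hlt : Real.arcsin S < π - θ := by linarith
    have := Real.strictMonoOn_sin hamem hφmem hlt
    rw [Real.sin_arcsin hS1.le hS2.le, Real.sin_pi_sub] at this
    exact this

end trig

section coordsys
open Real
variable (P1 P2 P3 : E)

def rr : ℝ := Real.sqrt (1 - Zc P1 P2 P3 ^ 2)
def Sv : ℝ := Yc P1 P2 P3 / rr P1 P2 P3
def zC : ℂ := (Dc P1 P2 P3 : ℂ) + (Cc P1 P2 P3 : ℂ) * Complex.I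
def th : ℝ := π/2 - Complex.arg (zC P1 P2 P3)
def LL : ℝ := π - 2 * Real.arcsin (Sv P1 P2 P3)
def tauv : ℝ := (th P1 P2 P3 - Real.arcsin (Sv P1 P2 P3)) / LL P1 P2 P3
def gam : ℝ := Real.log (tauv P1 P2 P3 / (1 - tauv P1 P2 P3))
def fMap3 : E := mk3 (Yc P1 P2 P3 / Aa P1 P2) (Zc P1 P2 P3 / Aa P1 P2) (gam P1 P2 P3)

variable {P1 P2 P3}

lemma Good.Aa_pos (g : Good P1 P2 P3) : 0 < Aa P1 P2 := by
  have := g.sQ_pos; unfold Aa; linarith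

lemma Good.pars1 (g : Good P1 P2 P3) :
    Aa P1 P2 ^ 2 + Yc P1 P2 P3 ^ 2 + Zc P1 P2 P3 ^ 2 = 1 := by
  have h := g.parseval P1
  rw [g.dot_P1_eh, g.n1] at h
  have e1 : Yc P1 P2 P3 = dot P1 (mh P1 P2 P3) := rfl
  have e2 : Zc P1 P2 P3 = dot P1 (nh P1 P2 P3) := rfl
  rw [e1, e2]
  nlinarith [h]

lemma Good.pars3 (g : Good P1 P2 P3) :
    Cc P1 P2 P3 ^ 2 + Dc P1 P2 P3 ^ 2 + Zc P1 P2 P3 ^ 2 = 1 := by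
  have h := g.parseval P3
  rw [g.dot_P3_nh, g.n3] at h
  have e1 : Cc P1 P2 P3 = dot P3 (eh P1 P2) := rfl
  have e2 : Dc P1 P2 P3 = dot P3 (mh P1 P2 P3) := rfl
  rw [e1, e2]
  nlinarith [h]

lemma Good.YZ_lt (g : Good P1 P2 P3) : Yc P1 P2 P3 ^ 2 + Zc P1 P2 P3 ^ 2 < 1 := by
  have := g.pars1; have := g.Aa_pos; nlinarith

lemma Good.rr_pos (g : Good P1 P2 P3) : 0 < rr P1 P2 P3 := by
  apply Real.sqrt_pos.2
  have := g.YZ_lt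
  nlinarith [sq_nonneg (Yc P1 P2 P3)]

lemma Good.rr_sq (g : Good P1 P2 P3) : rr P1 P2 P3 ^ 2 = 1 - Zc P1 P2 P3 ^ 2 := by
  apply Real.sq_sqrt
  have := g.YZ_lt
  nlinarith [sq_nonneg (Yc P1 P2 P3)]

lemma Good.Y_lt_r (g : Good P1 P2 P3) : Yc P1 P2 P3 < rr P1 P2 P3 := by
  have h1 := g.YZ_lt; have h2 := g.rr_sq; have h3 := g.rr_pos
  nlinarith

lemma Good.neg_r_lt_Y (g : Good P1 P2 P3) : -rr P1 P2 P3 < Yc P1 P2 P3 := by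
  have h1 := g.YZ_lt; have h2 := g.rr_sq; have h3 := g.rr_pos
  nlinarith

lemma Good.S_lt_one (g : Good P1 P2 P3) : Sv P1 P2 P3 < 1 := by
  have := g.Y_lt_r; have hr := g.rr_pos
  unfold Sv
  rw [div_lt_one hr]; exact this

lemma Good.neg_one_lt_S (g : Good P1 P2 P3) : -1 < Sv P1 P2 P3 := by
  have := g.neg_r_lt_Y; have hr := g.rr_pos
  unfold Sv
  rw [lt_div_iff₀ hr]; linarith

lemma Good.abs_zC (g : Good P1 P2 P3) : ‖zC P1 P2 P3‖ = rr P1 P2 P3 := by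
  unfold zC
  rw [Complex.norm_add_mul_I]
  have h := g.pars3
  have e : Dc P1 P2 P3 ^ 2 + Cc P1 P2 P3 ^ 2 = 1 - Zc P1 P2 P3 ^ 2 := by linarith
  rw [e]
  rfl

lemma Good.zC_ne (g : Good P1 P2 P3) : zC P1 P2 P3 ≠ 0 := by
  intro h
  have := g.abs_zC
  rw [h] at this
  simp at this
  have := g.rr_pos
  linarith

lemma Good.sin_th (g : Good P1 P2 P3) :
    Real.sin (th P1 P2 P3) = Dc P1 P2 P3 / rr P1 P2 P3 := by
  unfold th
  rw [Real.sin_pi_div_two_sub, Complex.cos_arg g.zC_ne, g.abs_zC]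
  simp [zC]

lemma Good.cos_th (g : Good P1 P2 P3) :
    Real.cos (th P1 P2 P3) = Cc P1 P2 P3 / rr P1 P2 P3 := by
  unfold th
  rw [Real.cos_pi_div_two_sub, Complex.sin_arg, g.abs_zC]
  simp [zC]

lemma Good.th_lb (g : Good P1 P2 P3) : -(π/2) ≤ th P1 P2 P3 := by
  have := (Complex.arg_mem_Ioc (zC P1 P2 P3)).2
  unfold th; linarith

lemma Good.th_ub (g : Good P1 P2 P3) : th P1 P2 P3 < 3*(π/2) := by
  have := (Complex.arg_mem_Ioc (zC P1 P2 P3)).1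
  unfold th; linarith

lemma Good.sin_th_gt (g : Good P1 P2 P3) : Sv P1 P2 P3 < Real.sin (th P1 P2 P3) := by
  rw [g.sin_th]
  unfold Sv
  exact div_lt_div_of_pos_right g.D_gt_Y g.rr_pos

lemma Good.th_mem (g : Good P1 P2 P3) :
    Real.arcsin (Sv P1 P2 P3) < th P1 P2 P3 ∧
      th P1 P2 P3 < π - Real.arcsin (Sv P1 P2 P3) :=
  mem_of_sin_gt g.neg_one_lt_S g.S_lt_one g.th_lb g.th_ub g.sin_th_gt

lemma Good.LL_pos (g : Good P1 P2 P3) : 0 < LL P1 P2 P3 := by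
  have := Real.arcsin_lt_pi_div_two.2 g.S_lt_one
  unfold LL; linarith

lemma Good.tauv_mem (g : Good P1 P2 P3) : 0 < tauv P1 P2 P3 ∧ tauv P1 P2 P3 < 1 := by
  have h := g.th_mem
  have hL := g.LL_pos
  unfold tauv
  constructor
  · apply div_pos _ hL
    linarith [h.1]
  · rw [div_lt_one hL]
    unfold LL
    linarith [h.2]

lemma Good.th_eq (g : Good P1 P2 P3) :
    th P1 P2 P3 = Real.arcsin (Sv P1 P2 P3) + LL P1 P2 P3 * tauv P1 P2 P3 := by
  have hL := g.LL_pos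
  unfold tauv
  field_simp
  ring

end coordsys

section sigma
open Real

def qv (x : E) : ℝ := Real.sqrt (1 + x 0 ^ 2 + x 1 ^ 2)
def yv (x : E) : ℝ := x 0 / qv x
def zv (x : E) : ℝ := x 1 / qv x
def av (x : E) : ℝ := (qv x)⁻¹
def rv (x : E) : ℝ := Real.sqrt (1 - zv x ^ 2)
def sv (x : E) : ℝ := yv x / rv x
def tv (x : E) : ℝ := (1 + Real.exp (-x 2))⁻¹
def thv (x : E) : ℝ := Real.arcsin (sv x) + (π - 2 * Real.arcsin (sv x)) * tv x
def sp1 (x : E) : E := mk3 (-(av x)) (yv x) (zv x)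
def sp2 (x : E) : E := mk3 (av x) (yv x) (zv x)
def sp3 (x : E) : E := mk3 (rv x * Real.cos (thv x)) (rv x * Real.sin (thv x)) (zv x)

variable (x : E)

lemma qv_pos : 0 < qv x := by
  apply Real.sqrt_pos.2; positivity

lemma qv_sq : qv x ^ 2 = 1 + x 0 ^ 2 + x 1 ^ 2 := by
  apply Real.sq_sqrt; positivity

lemma av_pos : 0 < av x := by
  unfold av; exact inv_pos.2 (qv_pos x)

lemma sum_sq : av x ^ 2 + yv x ^ 2 + zv x ^ 2 = 1 := by
  unfold av yv zv
  have h1 := qv_pos x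
  have h2 := qv_sq x
  field_simp
  linarith

lemma zv_sq_lt : zv x ^ 2 < 1 := by
  have := sum_sq x
  have := av_pos x
  nlinarith [sq_nonneg (yv x)]

lemma rv_pos : 0 < rv x := by
  apply Real.sqrt_pos.2; nlinarith [zv_sq_lt x]

lemma rv_sq : rv x ^ 2 = 1 - zv x ^ 2 := by
  apply Real.sq_sqrt; nlinarith [zv_sq_lt x]

lemma yv_lt_rv : yv x < rv x := by
  have h1 := sum_sq x
  have h2 := rv_sq x
  have h3 := rv_pos x
  have h4 := av_pos x
  nlinarith

lemma neg_rv_lt_yv : -rv x < yv x := by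
  have h1 := sum_sq x
  have h2 := rv_sq x
  have h3 := rv_pos x
  have h4 := av_pos x
  nlinarith

lemma sv_lt_one : sv x < 1 := by
  unfold sv; rw [div_lt_one (rv_pos x)]; exact yv_lt_rv x

lemma neg_one_lt_sv : -1 < sv x := by
  unfold sv; rw [lt_div_iff₀ (rv_pos x)]; linarith [neg_rv_lt_yv x]

lemma tv_pos : 0 < tv x := by
  unfold tv; positivity

lemma tv_lt_one : tv x < 1 := by
  unfold tv
  rw [inv_lt_one_iff₀]
  right
  linarith [Real.exp_pos (-x 2)]

lemma Lv_pos : 0 < π - 2 * Real.arcsin (sv x) := by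
  have := Real.arcsin_lt_pi_div_two.2 (sv_lt_one x)
  linarith

lemma thv_mem : Real.arcsin (sv x) < thv x ∧ thv x < π - Real.arcsin (sv x) := by
  have hL := Lv_pos x
  have h1 := tv_pos x
  have h2 := tv_lt_one x
  unfold thv
  constructor
  · nlinarith
  · nlinarith

lemma sin_thv_gt : sv x < Real.sin (thv x) :=
  sin_gt_of_mem (neg_one_lt_sv x) (sv_lt_one x) (thv_mem x).1 (thv_mem x).2

lemma rv_sin_gt : yv x < rv x * Real.sin (thv x) := by
  have := sin_thv_gt x
  have hr := rv_pos x
  have : sv x * rv x < Real.sin (thv x) * rv x := by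
    exact mul_lt_mul_of_pos_right this hr
  unfold sv at this
  rw [div_mul_cancel₀] at this
  · linarith
  · exact ne_of_gt hr

lemma sp1_mem : dot (sp1 x) (sp1 x) = 1 := by
  unfold sp1 dot
  simp only [mk3_0, mk3_1, mk3_2]
  have := sum_sq x
  nlinarith

lemma sp2_mem : dot (sp2 x) (sp2 x) = 1 := by
  unfold sp2 dot
  simp only [mk3_0, mk3_1, mk3_2]
  have := sum_sq x
  nlinarith

lemma sp3_mem : dot (sp3 x) (sp3 x) = 1 := by
  unfold sp3 dot
  simp only [mk3_0, mk3_1, mk3_2]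
  have h1 := rv_sq x
  have h2 := Real.sin_sq_add_cos_sq (thv x)
  nlinarith

lemma sp12_ne : sp1 x ≠ sp2 x := by
  intro h
  have := congrArg (fun v : E => v 0) h
  simp only [sp1, sp2, mk3_0] at this
  have := av_pos x
  linarith

lemma sp23_ne : sp2 x ≠ sp3 x := by
  intro h
  have := congrArg (fun v : E => v 1) h
  simp only [sp2, sp3, mk3_1] at this
  have := rv_sin_gt x
  linarith

lemma sp31_ne : sp3 x ≠ sp1 x := by
  intro h
  have := congrArg (fun v : E => v 1) h
  simp only [sp1, sp3, mk3_1] at this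
  have := rv_sin_gt x
  linarith

lemma spGood : Good (sp1 x) (sp2 x) (sp3 x) :=
  ⟨sp1_mem x, sp2_mem x, sp3_mem x, sp12_ne x, sp23_ne x, sp31_ne x⟩

end sigma

section fsigma
open Real

lemma arg_aux {r θ : ℝ} (hr : 0 < r) (h1 : -(π/2) < θ) (h2 : θ < 3*(π/2)) :
    Complex.arg (((r * Real.sin θ : ℝ) : ℂ) + ((r * Real.cos θ : ℝ) : ℂ) * Complex.I)
      = π/2 - θ := by
  have hφ : π/2 - θ ∈ Set.Ioc (-π) π := by
    constructor <;> [linarith; linarith]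
  have key : (((r * Real.sin θ : ℝ) : ℂ) + ((r * Real.cos θ : ℝ) : ℂ) * Complex.I)
      = (r : ℂ) * (Complex.cos ((π/2 - θ : ℝ) : ℂ) + Complex.sin ((π/2 - θ : ℝ) : ℂ) * Complex.I) := by
    rw [← Complex.ofReal_cos, ← Complex.ofReal_sin]
    rw [Real.cos_pi_div_two_sub, Real.sin_pi_div_two_sub]
    push_cast
    ring
  rw [key, Complex.arg_real_mul _ hr, Complex.arg_cos_add_sin_mul_I hφ]

variable (x : E)

lemma sig_uu : uu (sp1 x) (sp2 x) = mk3 (2 * av x) 0 0 := by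
  apply ext3 <;> simp [uu, sp1, sp2] <;> ring

lemma sig_Qd : Qd (sp1 x) (sp2 x) = 4 * av x ^ 2 := by
  unfold Qd
  rw [sig_uu]
  unfold dot; simp; ring

lemma sig_sQ : sQ (sp1 x) (sp2 x) = 2 * av x := by
  unfold sQ
  rw [sig_Qd]
  rw [show 4 * av x ^ 2 = (2 * av x)^2 by ring]
  exact Real.sqrt_sq (by linarith [av_pos x])

lemma sig_Aa : Aa (sp1 x) (sp2 x) = av x := by
  unfold Aa; rw [sig_sQ]; ring

lemma sig_eh : eh (sp1 x) (sp2 x) = mk3 1 0 0 := by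
  unfold eh
  rw [sig_sQ, sig_uu]
  have h := av_pos x
  apply ext3 <;> simp <;> field_simp <;> try ring

lemma sig_vv : vv (sp1 x) (sp3 x)
    = mk3 (rv x * Real.cos (thv x) + av x) (rv x * Real.sin (thv x) - yv x) 0 := by
  apply ext3 <;> simp [vv, sp1, sp3] <;> ring

lemma sig_nv : nv (sp1 x) (sp2 x) (sp3 x)
    = mk3 0 0 (2 * av x * (rv x * Real.sin (thv x) - yv x)) := by
  unfold nv
  rw [sig_uu, sig_vv]
  apply ext3 <;> simp [cross] <;> ring

lemma kv_pos : 0 < 2 * av x * (rv x * Real.sin (thv x) - yv x) := by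
  have h1 := av_pos x
  have h2 := rv_sin_gt x
  nlinarith

lemma sig_Nd : Nd (sp1 x) (sp2 x) (sp3 x)
    = (2 * av x * (rv x * Real.sin (thv x) - yv x))^2 := by
  unfold Nd
  rw [sig_nv]
  unfold dot; simp; ring

lemma sig_sN : sN (sp1 x) (sp2 x) (sp3 x)
    = 2 * av x * (rv x * Real.sin (thv x) - yv x) := by
  unfold sN
  rw [sig_Nd]
  exact Real.sqrt_sq (kv_pos x).le

lemma sig_nh : nh (sp1 x) (sp2 x) (sp3 x) = mk3 0 0 1 := by
  unfold nh
  rw [sig_sN, sig_nv]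
  have h := kv_pos x
  have h1 := av_pos x
  have h2 := rv_sin_gt x
  have h3 : rv x * Real.sin (thv x) - yv x ≠ 0 := by nlinarith
  have h4 : av x ≠ 0 := ne_of_gt h1
  apply ext3 <;> simp <;> field_simp <;> try ring

lemma sig_mh : mh (sp1 x) (sp2 x) (sp3 x) = mk3 0 1 0 := by
  unfold mh
  rw [sig_nh, sig_eh]
  apply ext3 <;> simp [cross]

lemma sig_Yc : Yc (sp1 x) (sp2 x) (sp3 x) = yv x := by
  unfold Yc
  rw [sig_mh]
  unfold dot sp1; simp

lemma sig_Zc : Zc (sp1 x) (sp2 x) (sp3 x) = zv x := by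
  unfold Zc
  rw [sig_nh]
  unfold dot sp1; simp

lemma sig_Cc : Cc (sp1 x) (sp2 x) (sp3 x) = rv x * Real.cos (thv x) := by
  unfold Cc
  rw [sig_eh]
  unfold dot sp3; simp

lemma sig_Dc : Dc (sp1 x) (sp2 x) (sp3 x) = rv x * Real.sin (thv x) := by
  unfold Dc
  rw [sig_mh]
  unfold dot sp3; simp

lemma sig_Sv : Sv (sp1 x) (sp2 x) (sp3 x) = sv x := by
  unfold Sv rr
  rw [sig_Yc, sig_Zc]
  rfl

lemma thv_lb : -(π/2) < thv x := by
  have := (thv_mem x).1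
  have := Real.neg_pi_div_two_le_arcsin (sv x)
  linarith

lemma thv_ub : thv x < 3*(π/2) := by
  have := (thv_mem x).2
  have := Real.neg_pi_div_two_le_arcsin (sv x)
  linarith

lemma sig_th : th (sp1 x) (sp2 x) (sp3 x) = thv x := by
  unfold th zC
  rw [sig_Cc, sig_Dc]
  rw [arg_aux (rv_pos x) (thv_lb x) (thv_ub x)]
  ring

lemma sig_tauv : tauv (sp1 x) (sp2 x) (sp3 x) = tv x := by
  unfold tauv LL
  rw [sig_th, sig_Sv]
  unfold thv
  have hL := Lv_pos x
  rw [div_eq_iff (ne_of_gt hL)]; ring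

lemma sig_gam : gam (sp1 x) (sp2 x) (sp3 x) = x 2 := by
  unfold gam
  rw [sig_tauv]
  have h1 := tv_pos x
  have h2 := tv_lt_one x
  have key : tv x / (1 - tv x) = Real.exp (x 2) := by
    unfold tv
    have hE := Real.exp_pos (-x 2)
    rw [Real.exp_neg]
    rw [Real.exp_neg] at hE
    have hx := Real.exp_pos (x 2)
    field_simp
    ring
  rw [key, Real.log_exp]

lemma fT_sigma : fMap3 (sp1 x) (sp2 x) (sp3 x) = x := by
  unfold fMap3
  rw [sig_Yc, sig_Zc, sig_Aa, sig_gam]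
  have hq := qv_pos x
  apply ext3 <;> simp [yv, zv, av]
  · field_simp
  · field_simp

end fsigma

section equivariance
open Matrix

variable (A : Matrix (Fin 3) (Fin 3) ℝ)

def mv (A : Matrix (Fin 3) (Fin 3) ℝ) (p : E) : E := WithLp.toLp 2 (A.mulVec p)

@[simp] lemma mv_apply (p : E) (i : Fin 3) : mv A p i = (A.mulVec p) i := rfl

lemma mv_sub (x y : E) : mv A (x - y) = mv A x - mv A y := by
  ext i; simp [mv, Matrix.mulVec_sub]

lemma mv_smul (c : ℝ) (x : E) : mv A (c • x) = c • mv A x := by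
  ext i; simp [mv, Matrix.mulVec_smul]

lemma mv_mv (B : Matrix (Fin 3) (Fin 3) ℝ) (x : E) : mv A (mv B x) = mv (A * B) x := by
  ext i; simp [mv, Matrix.mulVec_mulVec]

lemma one_mv (x : E) : mv 1 x = x := by
  ext i; simp [mv]

lemma entryAtA (hA : Aᵀ * A = 1) (a b : Fin 3) :
    A 0 a * A 0 b + A 1 a * A 1 b + A 2 a * A 2 b = (1 : Matrix (Fin 3) (Fin 3) ℝ) a b := by
  have h := congrFun (congrFun hA a) b
  rw [← h, Matrix.mul_apply]
  simp [Fin.sum_univ_three, Matrix.transpose_apply]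

lemma Adot (hA : Aᵀ * A = 1) (p q : E) :
    dot (mv A p) (mv A q) = dot p q := by
  have h00 := entryAtA A hA 0 0
  have h01 := entryAtA A hA 0 1
  have h02 := entryAtA A hA 0 2
  have h10 := entryAtA A hA 1 0
  have h11 := entryAtA A hA 1 1
  have h12 := entryAtA A hA 1 2
  have h20 := entryAtA A hA 2 0
  have h21 := entryAtA A hA 2 1
  have h22 := entryAtA A hA 2 2
  simp [Matrix.one_apply] at h00 h01 h02 h10 h11 h12 h20 h21 h22
  unfold dot
  simp [Matrix.mulVec, dotProduct, Fin.sum_univ_three]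
  linear_combination p 0 * q 0 * h00 + p 0 * q 1 * h01 + p 0 * q 2 * h02
    + p 1 * q 0 * h10 + p 1 * q 1 * h11 + p 1 * q 2 * h12
    + p 2 * q 0 * h20 + p 2 * q 1 * h21 + p 2 * q 2 * h22

lemma cross_adj (p q : E) :
    cross (mv A p) (mv A q) = mv (A.adjugate)ᵀ (cross p q) := by
  apply ext3 <;>
    (unfold cross
     simp [Matrix.adjugate_fin_three, Matrix.mulVec, dotProduct, Fin.sum_univ_three,
       Matrix.transpose_apply]
     ring)

lemma adj_eq (hA : Aᵀ * A = 1) (hdet : A.det = 1) : A.adjugate = Aᵀ := by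
  calc A.adjugate = 1 * A.adjugate := (one_mul _).symm
    _ = (Aᵀ * A) * A.adjugate := by rw [hA]
    _ = Aᵀ * (A * A.adjugate) := by rw [Matrix.mul_assoc]
    _ = Aᵀ * (A.det • 1) := by rw [Matrix.mul_adjugate]
    _ = Aᵀ := by rw [hdet, one_smul, mul_one]

lemma cross_equivariant (hA : Aᵀ * A = 1) (hdet : A.det = 1) (p q : E) :
    cross (mv A p) (mv A q) = mv A (cross p q) := by
  rw [cross_adj, adj_eq A hA hdet, Matrix.transpose_transpose]

end equivariance

section invariance
open Matrix

variable (A : Matrix (Fin 3) (Fin 3) ℝ) (P1 P2 P3 : E)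

lemma uu_inv (hA : Aᵀ * A = 1) (hdet : A.det = 1) : uu (mv A P1) (mv A P2) = mv A (uu P1 P2) := by
  unfold uu; exact (mv_sub A _ _).symm

lemma vv_inv (hA : Aᵀ * A = 1) (hdet : A.det = 1) : vv (mv A P1) (mv A P3) = mv A (vv P1 P3) := by
  unfold vv; exact (mv_sub A _ _).symm

lemma nv_inv (hA : Aᵀ * A = 1) (hdet : A.det = 1) : nv (mv A P1) (mv A P2) (mv A P3) = mv A (nv P1 P2 P3) := by
  unfold nv
  rw [uu_inv A P1 P2 hA hdet, vv_inv A P1 P3 hA hdet, cross_equivariant A hA hdet]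

lemma Qd_inv (hA : Aᵀ * A = 1) (hdet : A.det = 1) : Qd (mv A P1) (mv A P2) = Qd P1 P2 := by
  unfold Qd
  rw [uu_inv A P1 P2 hA hdet, Adot A hA]

lemma sQ_inv (hA : Aᵀ * A = 1) (hdet : A.det = 1) : sQ (mv A P1) (mv A P2) = sQ P1 P2 := by
  unfold sQ; rw [Qd_inv A P1 P2 hA hdet]

lemma eh_inv (hA : Aᵀ * A = 1) (hdet : A.det = 1) : eh (mv A P1) (mv A P2) = mv A (eh P1 P2) := by
  unfold eh
  rw [uu_inv A P1 P2 hA hdet, sQ_inv A P1 P2 hA hdet, mv_smul]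

lemma Nd_inv (hA : Aᵀ * A = 1) (hdet : A.det = 1) : Nd (mv A P1) (mv A P2) (mv A P3) = Nd P1 P2 P3 := by
  unfold Nd
  rw [nv_inv A P1 P2 P3 hA hdet, Adot A hA]

lemma sN_inv (hA : Aᵀ * A = 1) (hdet : A.det = 1) : sN (mv A P1) (mv A P2) (mv A P3) = sN P1 P2 P3 := by
  unfold sN; rw [Nd_inv A P1 P2 P3 hA hdet]

lemma nh_inv (hA : Aᵀ * A = 1) (hdet : A.det = 1) : nh (mv A P1) (mv A P2) (mv A P3) = mv A (nh P1 P2 P3) := by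
  unfold nh
  rw [nv_inv A P1 P2 P3 hA hdet, sN_inv A P1 P2 P3 hA hdet, mv_smul]

lemma mh_inv (hA : Aᵀ * A = 1) (hdet : A.det = 1) : mh (mv A P1) (mv A P2) (mv A P3) = mv A (mh P1 P2 P3) := by
  unfold mh
  rw [nh_inv A P1 P2 P3 hA hdet, eh_inv A P1 P2 hA hdet, cross_equivariant A hA hdet]

lemma Yc_inv (hA : Aᵀ * A = 1) (hdet : A.det = 1) : Yc (mv A P1) (mv A P2) (mv A P3) = Yc P1 P2 P3 := by
  unfold Yc
  rw [mh_inv A P1 P2 P3 hA hdet, Adot A hA]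

lemma Zc_inv (hA : Aᵀ * A = 1) (hdet : A.det = 1) : Zc (mv A P1) (mv A P2) (mv A P3) = Zc P1 P2 P3 := by
  unfold Zc
  rw [nh_inv A P1 P2 P3 hA hdet, Adot A hA]

lemma Cc_inv (hA : Aᵀ * A = 1) (hdet : A.det = 1) : Cc (mv A P1) (mv A P2) (mv A P3) = Cc P1 P2 P3 := by
  unfold Cc
  rw [eh_inv A P1 P2 hA hdet, Adot A hA]

lemma Dc_inv (hA : Aᵀ * A = 1) (hdet : A.det = 1) : Dc (mv A P1) (mv A P2) (mv A P3) = Dc P1 P2 P3 := by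
  unfold Dc
  rw [mh_inv A P1 P2 P3 hA hdet, Adot A hA]

lemma Aa_inv (hA : Aᵀ * A = 1) (hdet : A.det = 1) : Aa (mv A P1) (mv A P2) = Aa P1 P2 := by
  unfold Aa; rw [sQ_inv A P1 P2 hA hdet]

lemma fMap3_inv (hA : Aᵀ * A = 1) (hdet : A.det = 1) : fMap3 (mv A P1) (mv A P2) (mv A P3) = fMap3 P1 P2 P3 := by
  unfold fMap3 gam tauv LL th zC Sv rr
  rw [Yc_inv A P1 P2 P3 hA hdet, Zc_inv A P1 P2 P3 hA hdet, Cc_inv A P1 P2 P3 hA hdet,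
    Dc_inv A P1 P2 P3 hA hdet, Aa_inv A P1 P2 hA hdet]

end invariance

section canonical
open Matrix
variable {P1 P2 P3 : E}

lemma Good.can_qv (g : Good P1 P2 P3) : qv (fMap3 P1 P2 P3) = (Aa P1 P2)⁻¹ := by
  have hA := g.Aa_pos
  have hp := g.pars1
  unfold qv
  have e0 : fMap3 P1 P2 P3 0 = Yc P1 P2 P3 / Aa P1 P2 := rfl
  have e1 : fMap3 P1 P2 P3 1 = Zc P1 P2 P3 / Aa P1 P2 := rfl
  rw [e0, e1]
  have key : 1 + (Yc P1 P2 P3 / Aa P1 P2)^2 + (Zc P1 P2 P3 / Aa P1 P2)^2 = ((Aa P1 P2)⁻¹)^2 := by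
    field_simp
    nlinarith [hp]
  rw [key]
  exact Real.sqrt_sq (by positivity)

lemma Good.can_yv (g : Good P1 P2 P3) : yv (fMap3 P1 P2 P3) = Yc P1 P2 P3 := by
  have hA := g.Aa_pos
  unfold yv
  rw [g.can_qv]
  have e0 : fMap3 P1 P2 P3 0 = Yc P1 P2 P3 / Aa P1 P2 := rfl
  rw [e0]
  field_simp

lemma Good.can_zv (g : Good P1 P2 P3) : zv (fMap3 P1 P2 P3) = Zc P1 P2 P3 := by
  have hA := g.Aa_pos
  unfold zv
  rw [g.can_qv]
  have e1 : fMap3 P1 P2 P3 1 = Zc P1 P2 P3 / Aa P1 P2 := rfl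
  rw [e1]
  field_simp

lemma Good.can_av (g : Good P1 P2 P3) : av (fMap3 P1 P2 P3) = Aa P1 P2 := by
  unfold av
  rw [g.can_qv, inv_inv]

lemma Good.can_rv (g : Good P1 P2 P3) : rv (fMap3 P1 P2 P3) = rr P1 P2 P3 := by
  unfold rv rr
  rw [g.can_zv]

lemma Good.can_sv (g : Good P1 P2 P3) : sv (fMap3 P1 P2 P3) = Sv P1 P2 P3 := by
  unfold sv Sv
  rw [g.can_yv, g.can_rv]

lemma Good.can_tv (g : Good P1 P2 P3) : tv (fMap3 P1 P2 P3) = tauv P1 P2 P3 := by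
  have h1 := g.tauv_mem.1
  have h2 := g.tauv_mem.2
  unfold tv
  have e2 : fMap3 P1 P2 P3 2 = gam P1 P2 P3 := rfl
  rw [e2]
  unfold gam
  rw [Real.exp_neg, Real.exp_log (div_pos h1 (by linarith))]
  rw [inv_div]
  have h3 : tauv P1 P2 P3 ≠ 0 := ne_of_gt h1
  field_simp
  ring

lemma Good.can_thv (g : Good P1 P2 P3) : thv (fMap3 P1 P2 P3) = th P1 P2 P3 := by
  unfold thv
  rw [g.can_sv, g.can_tv]
  rw [g.th_eq]
  rfl

lemma Good.can_sp1 (g : Good P1 P2 P3) :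
    sp1 (fMap3 P1 P2 P3) = mk3 (-(Aa P1 P2)) (Yc P1 P2 P3) (Zc P1 P2 P3) := by
  unfold sp1
  rw [g.can_av, g.can_yv, g.can_zv]

lemma Good.can_sp2 (g : Good P1 P2 P3) :
    sp2 (fMap3 P1 P2 P3) = mk3 (Aa P1 P2) (Yc P1 P2 P3) (Zc P1 P2 P3) := by
  unfold sp2
  rw [g.can_av, g.can_yv, g.can_zv]

lemma Good.can_sp3 (g : Good P1 P2 P3) :
    sp3 (fMap3 P1 P2 P3) = mk3 (Cc P1 P2 P3) (Dc P1 P2 P3) (Zc P1 P2 P3) := by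
  have hr := g.rr_pos
  unfold sp3
  rw [g.can_rv, g.can_thv, g.can_zv, g.cos_th, g.sin_th]
  apply ext3 <;> simp <;> field_simp

lemma mulVec_Rm (p : E) : mv (Rm P1 P2 P3) p
    = mk3 (dot p (eh P1 P2)) (dot p (mh P1 P2 P3)) (dot p (nh P1 P2 P3)) := by
  apply ext3 <;>
    (simp [Matrix.mulVec, dotProduct, Fin.sum_univ_three, Rm, dot]; ring)

lemma Good.recover (g : Good P1 P2 P3) (p : E) :
    mv (Rm P1 P2 P3)ᵀ (mv (Rm P1 P2 P3) p) = p := by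
  rw [mv_mv, g.RtR, one_mv]

lemma Good.coords1 (g : Good P1 P2 P3) :
    mv (Rm P1 P2 P3) P1 = mk3 (-(Aa P1 P2)) (Yc P1 P2 P3) (Zc P1 P2 P3) := by
  rw [mulVec_Rm, g.dot_P1_eh]; rfl

lemma Good.coords2 (g : Good P1 P2 P3) :
    mv (Rm P1 P2 P3) P2 = mk3 (Aa P1 P2) (Yc P1 P2 P3) (Zc P1 P2 P3) := by
  rw [mulVec_Rm, g.dot_P2_eh, g.dot_P2_mh, g.dot_P2_nh]

lemma Good.coords3 (g : Good P1 P2 P3) :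
    mv (Rm P1 P2 P3) P3 = mk3 (Cc P1 P2 P3) (Dc P1 P2 P3) (Zc P1 P2 P3) := by
  rw [mulVec_Rm, g.dot_P3_nh]; rfl

lemma Good.RmT_mem (g : Good P1 P2 P3) :
    (Rm P1 P2 P3)ᵀ ∈ Matrix.specialOrthogonalGroup (Fin 3) ℝ := by
  rw [Matrix.mem_specialOrthogonalGroup_iff]
  constructor
  · rw [Matrix.mem_orthogonalGroup_iff]
    have hstar : star ((Rm P1 P2 P3)ᵀ) = Rm P1 P2 P3 := by
      ext i j
      simp [Matrix.star_apply, Matrix.transpose_apply]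
    rw [Matrix.transpose_transpose]
    exact g.RtR
  · rw [Matrix.det_transpose]
    exact g.detR

end canonical

section triples
open Matrix

def pt1 (t : DistinctTriples) : E := t.1.1.1
def pt2 (t : DistinctTriples) : E := t.1.2.1.1
def pt3 (t : DistinctTriples) : E := t.1.2.2.1

lemma goodT (t : DistinctTriples) : Good (pt1 t) (pt2 t) (pt3 t) := by
  refine ⟨(mem_sphere_iff _).1 t.1.1.2, (mem_sphere_iff _).1 t.1.2.1.2,
    (mem_sphere_iff _).1 t.1.2.2.2, ?_, ?_, ?_⟩
  · exact fun h => t.2.1 (Subtype.ext h)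
  · exact fun h => t.2.2.1 (Subtype.ext h)
  · exact fun h => t.2.2.2 (Subtype.ext h)

noncomputable def fT (t : DistinctTriples) : E := fMap3 (pt1 t) (pt2 t) (pt3 t)

noncomputable def sigT (x : E) : DistinctTriples :=
  ⟨⟨⟨sp1 x, (mem_sphere_iff _).2 (sp1_mem x)⟩,
    ⟨sp2 x, (mem_sphere_iff _).2 (sp2_mem x)⟩,
    ⟨sp3 x, (mem_sphere_iff _).2 (sp3_mem x)⟩⟩,
   fun h => sp12_ne x (congrArg Subtype.val h),
   fun h => sp23_ne x (congrArg Subtype.val h),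
   fun h => sp31_ne x (congrArg Subtype.val h)⟩

lemma fT_sigT (x : E) : fT (sigT x) = x := fT_sigma x

lemma memSO {A : Matrix (Fin 3) (Fin 3) ℝ}
    (hA : A ∈ Matrix.specialOrthogonalGroup (Fin 3) ℝ) : Aᵀ * A = 1 ∧ A.det = 1 := by
  rw [Matrix.mem_specialOrthogonalGroup_iff] at hA
  obtain ⟨h1, h2⟩ := hA
  rw [Matrix.mem_orthogonalGroup_iff] at h1
  have hstar : star A = Aᵀ := by
    ext i j
    simp [Matrix.star_apply, Matrix.transpose_apply]
  exact ⟨mul_eq_one_comm.mp h1, h2⟩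

lemma fT_invariant (t s : DistinctTriples) (h : rotRel t s) : fT t = fT s := by
  obtain ⟨A, h1, h2, h3⟩ := h
  obtain ⟨hA, hdet⟩ := memSO A.2
  have e1 : pt1 s = mv (A : Matrix (Fin 3) (Fin 3) ℝ) (pt1 t) := congrArg (WithLp.toLp 2) h1
  have e2 : pt2 s = mv (A : Matrix (Fin 3) (Fin 3) ℝ) (pt2 t) := congrArg (WithLp.toLp 2) h2
  have e3 : pt3 s = mv (A : Matrix (Fin 3) (Fin 3) ℝ) (pt3 t) := congrArg (WithLp.toLp 2) h3
  unfold fT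
  rw [e1, e2, e3]
  exact (fMap3_inv (A : Matrix (Fin 3) (Fin 3) ℝ) (pt1 t) (pt2 t) (pt3 t) hA hdet).symm

lemma rel_sig_f (t : DistinctTriples) : rotRel (sigT (fT t)) t := by
  have g := goodT t
  refine ⟨⟨(Rm (pt1 t) (pt2 t) (pt3 t))ᵀ, g.RmT_mem⟩, ?_, ?_, ?_⟩
  · show WithLp.ofLp (pt1 t) = WithLp.ofLp (mv (Rm (pt1 t) (pt2 t) (pt3 t))ᵀ (sp1 (fT t)))
    unfold fT
    rw [g.can_sp1, ← g.coords1, g.recover]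
  · show WithLp.ofLp (pt2 t) = WithLp.ofLp (mv (Rm (pt1 t) (pt2 t) (pt3 t))ᵀ (sp2 (fT t)))
    unfold fT
    rw [g.can_sp2, ← g.coords2, g.recover]
  · show WithLp.ofLp (pt3 t) = WithLp.ofLp (mv (Rm (pt1 t) (pt2 t) (pt3 t))ᵀ (sp3 (fT t)))
    unfold fT
    rw [g.can_sp3, ← g.coords3, g.recover]

end triples

section continuity
open Real

lemma continuous_apply3 (i : Fin 3) : Continuous (fun x : E => x i) :=
  (EuclideanSpace.proj (𝕜 := ℝ) (ι := Fin 3) i).continuous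

lemma continuous_mk3 {α : Type*} [TopologicalSpace α] {f g h : α → ℝ}
    (hf : Continuous f) (hg : Continuous g) (hh : Continuous h) :
    Continuous (fun a => mk3 (f a) (g a) (h a)) := by
  unfold mk3
  refine Continuous.comp (PiLp.continuous_toLp 2 (fun _ : Fin 3 => ℝ)) ?_
  refine continuous_pi ?_
  intro i; fin_cases i <;> simpa

lemma continuousAt_mk3 {α : Type*} [TopologicalSpace α] {f g h : α → ℝ} {a : α}
    (hf : ContinuousAt f a) (hg : ContinuousAt g a) (hh : ContinuousAt h a) :
    ContinuousAt (fun a => mk3 (f a) (g a) (h a)) a := by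
  unfold mk3
  refine ContinuousAt.comp ((PiLp.continuous_toLp 2 (fun _ : Fin 3 => ℝ)).continuousAt) ?_
  refine continuousAt_pi.2 ?_
  intro i; fin_cases i <;> simpa

lemma continuous_qv : Continuous qv := by
  unfold qv
  apply Real.continuous_sqrt.comp
  have h0 := continuous_apply3 0
  have h1 := continuous_apply3 1
  continuity

lemma continuous_yv : Continuous yv := by
  unfold yv
  exact (continuous_apply3 0).div continuous_qv (fun x => ne_of_gt (qv_pos x))

lemma continuous_zv : Continuous zv := by
  unfold zv
  exact (continuous_apply3 1).div continuous_qv (fun x => ne_of_gt (qv_pos x))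

lemma continuous_av : Continuous av := by
  unfold av
  exact continuous_qv.inv₀ (fun x => ne_of_gt (qv_pos x))

lemma continuous_rv : Continuous rv := by
  unfold rv
  apply Real.continuous_sqrt.comp
  have := continuous_zv
  continuity

lemma continuous_sv : Continuous sv := by
  unfold sv
  exact continuous_yv.div continuous_rv (fun x => ne_of_gt (rv_pos x))

lemma continuous_tv : Continuous tv := by
  unfold tv
  apply Continuous.inv₀
  · have h2 := continuous_apply3 2
    continuity
  · intro x
    have := Real.exp_pos (-x 2)
    positivity

lemma continuous_thv : Continuous thv := by
  unfold thv
  have h1 : Continuous (fun x => Real.arcsin (sv x)) :=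
    Real.continuous_arcsin.comp continuous_sv
  have h2 := continuous_tv
  continuity

lemma continuous_sp1 : Continuous sp1 := by
  unfold sp1
  exact continuous_mk3 continuous_av.neg continuous_yv continuous_zv

lemma continuous_sp2 : Continuous sp2 := by
  unfold sp2
  exact continuous_mk3 continuous_av continuous_yv continuous_zv

lemma continuous_sp3 : Continuous sp3 := by
  unfold sp3
  exact continuous_mk3 (continuous_rv.mul (Real.continuous_cos.comp continuous_thv))
    (continuous_rv.mul (Real.continuous_sin.comp continuous_thv)) continuous_zv

lemma continuous_sigT : Continuous sigT := by
  unfold sigT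
  apply Continuous.subtype_mk
  exact ((continuous_sp1.subtype_mk _).prodMk
    ((continuous_sp2.subtype_mk _).prodMk (continuous_sp3.subtype_mk _)))

end continuity

section fcont
open Real

lemma Yc_formula (P1 P2 P3 : E) :
    Yc P1 P2 P3 = (sN P1 P2 P3 * sQ P1 P2)⁻¹ * dot P1 (cross (nv P1 P2 P3) (uu P1 P2)) := by
  unfold Yc mh nh eh
  rw [cross_smul_left, cross_smul_right, dot_smul_right, dot_smul_right]
  ring

lemma Zc_formula (P1 P2 P3 : E) :
    Zc P1 P2 P3 = (sN P1 P2 P3)⁻¹ * dot P1 (nv P1 P2 P3) := by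
  unfold Zc nh
  rw [dot_smul_right]

lemma Cc_formula (P1 P2 P3 : E) :
    Cc P1 P2 P3 = (sQ P1 P2)⁻¹ * dot P3 (uu P1 P2) := by
  unfold Cc eh
  rw [dot_smul_right]

lemma Dc_formula (P1 P2 P3 : E) :
    Dc P1 P2 P3 = (sN P1 P2 P3 * sQ P1 P2)⁻¹ * dot P3 (cross (nv P1 P2 P3) (uu P1 P2)) := by
  unfold Dc mh nh eh
  rw [cross_smul_left, cross_smul_right, dot_smul_right, dot_smul_right]
  ring

lemma Good.slit {P1 P2 P3 : E} (g : Good P1 P2 P3) :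
    0 < Dc P1 P2 P3 ∨ Cc P1 P2 P3 ≠ 0 := by
  by_cases hC : Cc P1 P2 P3 = 0
  · left
    have hD2 : Dc P1 P2 P3 ^ 2 = rr P1 P2 P3 ^ 2 := by
      have := g.pars3; have := g.rr_sq; nlinarith [hC]
    nlinarith [g.D_gt_Y, g.neg_r_lt_Y, g.rr_pos, hD2]
  · right; exact hC

lemma cont_cross {α : Type*} [TopologicalSpace α] {f g : α → E}
    (hf : Continuous f) (hg : Continuous g) :
    Continuous (fun a => cross (f a) (g a)) := by
  unfold cross
  apply continuous_mk3 <;>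
    exact (((continuous_apply3 _).comp hf).mul ((continuous_apply3 _).comp hg)).sub
      (((continuous_apply3 _).comp hf).mul ((continuous_apply3 _).comp hg))

lemma cont_dot {α : Type*} [TopologicalSpace α] {f g : α → E}
    (hf : Continuous f) (hg : Continuous g) :
    Continuous (fun a => dot (f a) (g a)) := by
  unfold dot
  exact ((((continuous_apply3 0).comp hf).mul ((continuous_apply3 0).comp hg)).add
    (((continuous_apply3 1).comp hf).mul ((continuous_apply3 1).comp hg))).add
    (((continuous_apply3 2).comp hf).mul ((continuous_apply3 2).comp hg))

lemma continuous_pt1 : Continuous pt1 := by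
  unfold pt1
  exact continuous_subtype_val.comp (continuous_fst.comp continuous_subtype_val)

lemma continuous_pt2 : Continuous pt2 := by
  unfold pt2
  exact continuous_subtype_val.comp ((continuous_fst.comp continuous_snd).comp continuous_subtype_val)

lemma continuous_pt3 : Continuous pt3 := by
  unfold pt3
  exact continuous_subtype_val.comp ((continuous_snd.comp continuous_snd).comp continuous_subtype_val)

lemma continuous_fT : Continuous fT := by
  rw [continuous_iff_continuousAt]
  intro t0
  have g := goodT t0
  -- global continuous building blocks
  have cuu : Continuous (fun t => uu (pt1 t) (pt2 t)) := by
    unfold uu; exact continuous_pt2.sub continuous_pt1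
  have cvv : Continuous (fun t => vv (pt1 t) (pt3 t)) := by
    unfold vv; exact continuous_pt3.sub continuous_pt1
  have cnv : Continuous (fun t => nv (pt1 t) (pt2 t) (pt3 t)) := by
    unfold nv; exact cont_cross cuu cvv
  have cQd : Continuous (fun t => Qd (pt1 t) (pt2 t)) := by
    unfold Qd; exact cont_dot cuu cuu
  have cNd : Continuous (fun t => Nd (pt1 t) (pt2 t) (pt3 t)) := by
    unfold Nd; exact cont_dot cnv cnv
  have csQ : Continuous (fun t => sQ (pt1 t) (pt2 t)) := by
    unfold sQ; exact Real.continuous_sqrt.comp cQd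
  have csN : Continuous (fun t => sN (pt1 t) (pt2 t) (pt3 t)) := by
    unfold sN; exact Real.continuous_sqrt.comp cNd
  have hsQ0 : sQ (pt1 t0) (pt2 t0) ≠ 0 := ne_of_gt g.sQ_pos
  have hsN0 : sN (pt1 t0) (pt2 t0) (pt3 t0) ≠ 0 := ne_of_gt g.sN_pos
  -- scalar invariants, continuous at t0
  have cY : ContinuousAt (fun t => Yc (pt1 t) (pt2 t) (pt3 t)) t0 := by
    have e : (fun t => Yc (pt1 t) (pt2 t) (pt3 t))
        = fun t => (sN (pt1 t) (pt2 t) (pt3 t) * sQ (pt1 t) (pt2 t))⁻¹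
            * dot (pt1 t) (cross (nv (pt1 t) (pt2 t) (pt3 t)) (uu (pt1 t) (pt2 t))) :=
      funext fun t => Yc_formula _ _ _
    rw [e]
    exact (((csN.mul csQ).continuousAt).inv₀ (mul_ne_zero hsN0 hsQ0)).mul
      ((cont_dot continuous_pt1 (cont_cross cnv cuu)).continuousAt)
  have cZ : ContinuousAt (fun t => Zc (pt1 t) (pt2 t) (pt3 t)) t0 := by
    have e : (fun t => Zc (pt1 t) (pt2 t) (pt3 t))
        = fun t => (sN (pt1 t) (pt2 t) (pt3 t))⁻¹ * dot (pt1 t) (nv (pt1 t) (pt2 t) (pt3 t)) :=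
      funext fun t => Zc_formula _ _ _
    rw [e]
    exact ((csN.continuousAt).inv₀ hsN0).mul ((cont_dot continuous_pt1 cnv).continuousAt)
  have cC : ContinuousAt (fun t => Cc (pt1 t) (pt2 t) (pt3 t)) t0 := by
    have e : (fun t => Cc (pt1 t) (pt2 t) (pt3 t))
        = fun t => (sQ (pt1 t) (pt2 t))⁻¹ * dot (pt3 t) (uu (pt1 t) (pt2 t)) :=
      funext fun t => Cc_formula _ _ _
    rw [e]
    exact ((csQ.continuousAt).inv₀ hsQ0).mul ((cont_dot continuous_pt3 cuu).continuousAt)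
  have cD : ContinuousAt (fun t => Dc (pt1 t) (pt2 t) (pt3 t)) t0 := by
    have e : (fun t => Dc (pt1 t) (pt2 t) (pt3 t))
        = fun t => (sN (pt1 t) (pt2 t) (pt3 t) * sQ (pt1 t) (pt2 t))⁻¹
            * dot (pt3 t) (cross (nv (pt1 t) (pt2 t) (pt3 t)) (uu (pt1 t) (pt2 t))) :=
      funext fun t => Dc_formula _ _ _
    rw [e]
    exact (((csN.mul csQ).continuousAt).inv₀ (mul_ne_zero hsN0 hsQ0)).mul
      ((cont_dot continuous_pt3 (cont_cross cnv cuu)).continuousAt)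
  have cAa : ContinuousAt (fun t => Aa (pt1 t) (pt2 t)) t0 := by
    unfold Aa
    exact (csQ.continuousAt).div continuousAt_const two_ne_zero
  have hAa0 : Aa (pt1 t0) (pt2 t0) ≠ 0 := ne_of_gt g.Aa_pos
  have crr : ContinuousAt (fun t => rr (pt1 t) (pt2 t) (pt3 t)) t0 := by
    unfold rr
    exact (Real.continuous_sqrt.continuousAt).comp (continuousAt_const.sub (cZ.pow 2))
  have hrr0 : rr (pt1 t0) (pt2 t0) (pt3 t0) ≠ 0 := ne_of_gt g.rr_pos
  have cS : ContinuousAt (fun t => Sv (pt1 t) (pt2 t) (pt3 t)) t0 := by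
    unfold Sv
    exact cY.div crr hrr0
  have casin : ContinuousAt (fun t => Real.arcsin (Sv (pt1 t) (pt2 t) (pt3 t))) t0 :=
    (Real.continuous_arcsin.continuousAt).comp cS
  have czC : ContinuousAt (fun t => zC (pt1 t) (pt2 t) (pt3 t)) t0 := by
    unfold zC
    exact ((Complex.continuous_ofReal.continuousAt).comp cD).add
      (((Complex.continuous_ofReal.continuousAt).comp cC).mul continuousAt_const)
  have harg : ContinuousAt Complex.arg (zC (pt1 t0) (pt2 t0) (pt3 t0)) := by
    apply Complex.continuousAt_arg
    rw [Complex.mem_slitPlane_iff]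
    have hre : (zC (pt1 t0) (pt2 t0) (pt3 t0)).re = Dc (pt1 t0) (pt2 t0) (pt3 t0) := by
      simp [zC]
    have him : (zC (pt1 t0) (pt2 t0) (pt3 t0)).im = Cc (pt1 t0) (pt2 t0) (pt3 t0) := by
      simp [zC]
    rw [hre, him]
    exact g.slit
  have cth : ContinuousAt (fun t => th (pt1 t) (pt2 t) (pt3 t)) t0 := by
    unfold th
    exact continuousAt_const.sub (ContinuousAt.comp (f := fun t => zC (pt1 t) (pt2 t) (pt3 t)) harg czC)
  have cLL : ContinuousAt (fun t => LL (pt1 t) (pt2 t) (pt3 t)) t0 := by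
    unfold LL
    exact continuousAt_const.sub (continuousAt_const.mul casin)
  have hLL0 : LL (pt1 t0) (pt2 t0) (pt3 t0) ≠ 0 := ne_of_gt g.LL_pos
  have ctau : ContinuousAt (fun t => tauv (pt1 t) (pt2 t) (pt3 t)) t0 := by
    unfold tauv
    exact (cth.sub casin).div cLL hLL0
  have htau1 := g.tauv_mem.1
  have htau2 := g.tauv_mem.2
  have cgam : ContinuousAt (fun t => gam (pt1 t) (pt2 t) (pt3 t)) t0 := by
    unfold gam
    have hinner : ContinuousAt
        (fun t => tauv (pt1 t) (pt2 t) (pt3 t) / (1 - tauv (pt1 t) (pt2 t) (pt3 t))) t0 :=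
      ctau.div (continuousAt_const.sub ctau) (by linarith)
    have hne : tauv (pt1 t0) (pt2 t0) (pt3 t0) / (1 - tauv (pt1 t0) (pt2 t0) (pt3 t0)) ≠ 0 := by
      have : 0 < tauv (pt1 t0) (pt2 t0) (pt3 t0) / (1 - tauv (pt1 t0) (pt2 t0) (pt3 t0)) :=
        div_pos htau1 (by linarith)
      linarith
    exact ContinuousAt.comp (f := fun t => tauv (pt1 t) (pt2 t) (pt3 t) / (1 - tauv (pt1 t) (pt2 t) (pt3 t))) (Real.continuousAt_log hne) hinner
  show ContinuousAt fT t0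
  unfold fT fMap3
  exact continuousAt_mk3 (cY.div cAa hAa0) (cZ.div cAa hAa0) cgam

end fcont

section final

noncomputable def quotHomeo {T X : Type*} [TopologicalSpace T] [TopologicalSpace X]
    (r : T → T → Prop) (f : T → X) (σ : X → T)
    (hinv : ∀ a b, r a b → f a = f b)
    (hf : Continuous f) (hσ : Continuous σ)
    (hfs : ∀ x, f (σ x) = x)
    (hsf : ∀ t, Quot.mk r (σ (f t)) = Quot.mk r t) :
    Quot r ≃ₜ X where
  toFun := Quot.lift f hinv
  invFun := fun x => Quot.mk r (σ x)
  left_inv := by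
    intro q
    induction q using Quot.ind with
    | _ t => simpa using hsf t
  right_inv := fun x => by simpa using hfs x
  continuous_toFun := continuous_quot_lift hinv hf
  continuous_invFun := continuous_quot_mk.comp hσ

end final
end TB
end

/-- The space `T` of ordered triples of pairwise-consecutively-distinct points on `S²`
modulo the diagonal action of `SO(3)` is homeomorphic to an open three-ball, i.e. to `ℝ³`. -/
theorem triple_space_homeomorphic_ball :
    Nonempty (Quot rotRel ≃ₜ EuclideanSpace ℝ (Fin 3)) := by
  refine ⟨TB.quotHomeo rotRel TB.fT TB.sigT TB.fT_invariant TB.continuous_fT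
    TB.continuous_sigT TB.fT_sigT ?_⟩
  intro t
  exact Quot.sound (TB.rel_sig_f t)
end
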